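/- arXiv:2003.10683 — 2 statements merged into one kernel-verified Lean document; each statement's English description precedes it below -/
import Mathlib

section
/- Let C be a triangulated category and let B be a strictly full triangulated subcategory of C. If B is idempotent complete (every idempotent endomorphism in B splits), then B is thick in C, i.e. B is closed under direct summands: whenever an object X of B decomposes as X ≅ Y ⊕ Z in C, both Y and Z belong to B. -/
/-!
A direct summand `Y` of `X ∈ B` is the image of the idempotent `pY ≫ iY` of `X`. Idempotent
completeness splits this idempotent through some `W ∈ B`, and any two splittings of one idempotent
are isomorphic, so `Y ≅ W` lies in `B` because `B` is closed under isomorphisms.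
-/

open CategoryTheory CategoryTheory.Limits CategoryTheory.Pretriangulated

universe v u

namespace CategoryTheory

variable {C : Type*} [Category C]

def Retract.isoOfIdempotentEq {W Y X : C} (h₁ : Retract W X) (h₂ : Retract Y X)
    (h : h₁.r ≫ h₁.i = h₂.r ≫ h₂.i) : W ≅ Y where
  hom := h₁.i ≫ h₂.r
  inv := h₂.i ≫ h₁.r
  hom_inv_id := calc
    (h₁.i ≫ h₂.r) ≫ h₂.i ≫ h₁.r = h₁.i ≫ (h₁.r ≫ h₁.i) ≫ h₁.r := by
      rw [h]; simp only [Category.assoc]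
    _ = 𝟙 W := by simp
  inv_hom_id := calc
    (h₂.i ≫ h₁.r) ≫ h₁.i ≫ h₂.r = h₂.i ≫ (h₂.r ≫ h₂.i) ≫ h₂.r := by
      rw [← h]; simp only [Category.assoc]
    _ = 𝟙 Y := by simp

lemma ObjectProperty.isStableUnderRetracts_of_idempotents_split (P : ObjectProperty C)
    [P.IsClosedUnderIsomorphisms]
    (hsplit : ∀ X : C, P X → ∀ e : X ⟶ X, e ≫ e = e →
      ∃ (W : C) (_ : P W) (r : X ⟶ W) (s : W ⟶ X), r ≫ s = e ∧ s ≫ r = 𝟙 W) :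
    P.IsStableUnderRetracts where
  of_retract {Y X} h hX := by
    have hidem : (h.r ≫ h.i) ≫ h.r ≫ h.i = h.r ≫ h.i := by simp
    obtain ⟨W, hW, r, s, hrs, hsr⟩ := hsplit X hX _ hidem
    exact P.prop_of_iso (Retract.isoOfIdempotentEq ⟨s, r, hsr⟩ h hrs) hW

end CategoryTheory

/-- Let `C` be a triangulated category and `B` a strictly full triangulated
subcategory of `C` (given as a set of objects: closed under isomorphisms, containing the zero
objects, closed under shifts, and closed under extensions by distinguished triangles).
If `B` is idempotent complete (every idempotent endomorphism of an object of `B` splits through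
an object of `B`), then `B` is thick: whenever an object `X` of `B` decomposes as a direct sum
`X ≅ Y ⊕ Z` in `C` (witnessed by a biproduct diagram), both `Y` and `Z` belong to `B`. -/
theorem ekedahl_inv_stmt0 {C : Type u} [Category.{v} C] [HasZeroObject C] [HasShift C ℤ]
    [Preadditive C] [∀ n : ℤ, (shiftFunctor C n).Additive] [Pretriangulated C]
    (B : Set C)
    -- `B` is strictly full (closed under isomorphisms)
    (hiso : ∀ ⦃X Y : C⦄, (X ≅ Y) → X ∈ B → Y ∈ B)
    -- `B` is a triangulated subcategory
    (hzero : ∀ X : C, IsZero X → X ∈ B)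
    (hshift : ∀ (X : C) (n : ℤ), X ∈ B → X⟦n⟧ ∈ B)
    (hext : ∀ T : Triangle C, T ∈ distinguishedTriangles →
      T.obj₁ ∈ B → T.obj₂ ∈ B → T.obj₃ ∈ B)
    -- `B` is idempotent complete
    (hidem : ∀ A : C, A ∈ B → ∀ p : A ⟶ A, p ≫ p = p →
      ∃ (Y : C) (_ : Y ∈ B) (r : A ⟶ Y) (s : Y ⟶ A), r ≫ s = p ∧ s ≫ r = 𝟙 Y) :
    -- then `B` is thick: closed under direct summands
    ∀ (X Y Z : C), X ∈ B →
      ∀ (iY : Y ⟶ X) (iZ : Z ⟶ X) (pY : X ⟶ Y) (pZ : X ⟶ Z),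
        iY ≫ pY = 𝟙 Y → iZ ≫ pZ = 𝟙 Z → iY ≫ pZ = 0 → iZ ≫ pY = 0 →
        pY ≫ iY + pZ ≫ iZ = 𝟙 X → Y ∈ B ∧ Z ∈ B := by
  intro X Y Z hX iY iZ pY pZ hY hZ _ _ _
  let P : ObjectProperty C := (· ∈ B)
  have : P.IsClosedUnderIsomorphisms := ⟨fun e hX => hiso e hX⟩
  have := P.isStableUnderRetracts_of_idempotents_split hidem
  exact ⟨P.prop_of_retract ⟨iY, pY, hY⟩ hX, P.prop_of_retract ⟨iZ, pZ, hZ⟩ hX⟩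
end

section
/- Let C be a triangulated category and let B be a full additive subcategory of C that is negative, whose objects densely generate C, and which is idempotent complete. Then the heart of the weight structure w on C determined by B (the unique weight structure whose heart is Kar_C(B)) equals B itself. -/
open CategoryTheory CategoryTheory.Limits CategoryTheory.Pretriangulated

universe v u

variable {C : Type u} [Category.{v} C] [HasZeroObject C] [HasShift C ℤ]
  [Preadditive C] [∀ n : ℤ, (shiftFunctor C n).Additive] [Pretriangulated C]

/-- `X` is a retract (equivalently, direct summand) of `W`. -/
def IsRetractOf (X W : C) : Prop := ∃ (i : X ⟶ W) (r : W ⟶ X), i ≫ r = 𝟙 X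

/-- The shift `S[j]` of a set of objects: objects isomorphic to `Y⟦j⟧` with `Y ∈ S`. -/
def shiftSet (S : Set C) (j : ℤ) : Set C := {X | ∃ Y ∈ S, Nonempty (X ≅ Y⟦j⟧)}

/-- The envelope of a set `S` of objects: the smallest full subcategory of `C` containing `S`
which is extension-closed (contains the zero objects and is closed under extensions by
distinguished triangles) and thick (closed under retracts). -/
def envelope (S : Set C) : Set C :=
  ⋂₀ {T : Set C | S ⊆ T ∧ (∀ X : C, IsZero X → X ∈ T) ∧
      (∀ Tr : Triangle C, Tr ∈ distinguishedTriangles → Tr.obj₁ ∈ T → Tr.obj₃ ∈ T →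
        Tr.obj₂ ∈ T) ∧
      (∀ X W : C, W ∈ T → IsRetractOf X W → X ∈ T)}

/-- `Kar_C(B)`: the smallest retraction-closed full subcategory of `C` containing `B`. -/
def karClosure (B : Set C) : Set C :=
  ⋂₀ {T : Set C | B ⊆ T ∧ ∀ X W : C, W ∈ T → IsRetractOf X W → X ∈ T}

variable (C) in
/-- A weight structure `w = (C^{w≤0}, C^{w≥0})` on the triangulated category `C`
(cohomological convention):
`le` is `C^{w≤0}` and `ge` is `C^{w≥0}`, with `C^{w≤n} := C^{w≤0}[-n]`, `C^{w≥n} := C^{w≥0}[-n]`;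
(1) both classes are strictly full, additive and Karoubi-closed (closed under retracts) in `C`;
(2) `C^{w≥1} ⊆ C^{w≥0}` and `C^{w≤0} ⊆ C^{w≤1}` (equivalently, by strict fullness, `le` is
closed under `⟦1⟧` and `ge` is closed under `⟦-1⟧`);
(3) `Hom(X, Y) = 0` for `X ∈ C^{w≤0}` and `Y ∈ C^{w≥1}`;
(4) every `X` fits in a distinguished triangle `B⟦-1⟧ → X → A → B` with
`A ∈ C^{w≤0}` and `B ∈ C^{w≥0}`. -/
structure WeightStructure where
  le : Set C
  ge : Set C
  le_iso : ∀ ⦃X Y : C⦄, (X ≅ Y) → X ∈ le → Y ∈ le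
  ge_iso : ∀ ⦃X Y : C⦄, (X ≅ Y) → X ∈ ge → Y ∈ ge
  le_zero : ∀ X : C, IsZero X → X ∈ le
  ge_zero : ∀ X : C, IsZero X → X ∈ ge
  le_sum : ∀ ⦃W X Y : C⦄, X ∈ le → Y ∈ le →
    ∀ (iX : X ⟶ W) (iY : Y ⟶ W) (pX : W ⟶ X) (pY : W ⟶ Y),
      iX ≫ pX = 𝟙 X → iY ≫ pY = 𝟙 Y → pX ≫ iX + pY ≫ iY = 𝟙 W → W ∈ le
  ge_sum : ∀ ⦃W X Y : C⦄, X ∈ ge → Y ∈ ge →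
    ∀ (iX : X ⟶ W) (iY : Y ⟶ W) (pX : W ⟶ X) (pY : W ⟶ Y),
      iX ≫ pX = 𝟙 X → iY ≫ pY = 𝟙 Y → pX ≫ iX + pY ≫ iY = 𝟙 W → W ∈ ge
  le_retract : ∀ ⦃X W : C⦄, W ∈ le → IsRetractOf X W → X ∈ le
  ge_retract : ∀ ⦃X W : C⦄, W ∈ ge → IsRetractOf X W → X ∈ ge
  le_shift : ∀ X : C, X ∈ le → X⟦(1 : ℤ)⟧ ∈ le
  ge_shift : ∀ X : C, X ∈ ge → X⟦(-1 : ℤ)⟧ ∈ ge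
  orth : ∀ ⦃X Y : C⦄, X ∈ le → Y ∈ ge → ∀ f : X ⟶ Y⟦(-1 : ℤ)⟧, f = 0
  decomp : ∀ X : C, ∃ A B : C, A ∈ le ∧ B ∈ ge ∧
    ∃ (f : B⟦(-1 : ℤ)⟧ ⟶ X) (g : X ⟶ A) (h : A ⟶ B⟦(-1 : ℤ)⟧⟦(1 : ℤ)⟧),
      Triangle.mk f g h ∈ distinguishedTriangles

/-! The heart is `Kar_C(B)`, so it suffices that `B` is closed under retracts in `C`. A retract
`X` of `W ∈ B` is the image of an idempotent of `W`; this idempotent splits in `B` through some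
`Z`, and two splittings of one idempotent have isomorphic images, so `X ≅ Z`. Finally `B` is
closed under isomorphisms, since `Z ≅ X` exhibits `X` as the direct sum of `Z` and a zero
object. -/

def isoOfSplittingsOfSameIdempotent {D : Type*} [Category D] {X Y Z : D}
    {i : X ⟶ Y} {r : Y ⟶ X} {s : Y ⟶ Z} {t : Z ⟶ Y}
    (hir : i ≫ r = 𝟙 X) (hts : t ≫ s = 𝟙 Z) (hst : s ≫ t = r ≫ i) : X ≅ Z where
  hom := i ≫ s
  inv := t ≫ r
  hom_inv_id := by
    rw [Category.assoc, reassoc_of% hst, reassoc_of% hir, hir]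
  inv_hom_id := by
    rw [Category.assoc, ← reassoc_of% hst, reassoc_of% hts, hts]

open ZeroObject in
lemma mem_of_iso_of_isZero_mem_of_biprod_mem {D : Type*} [Category D] [Preadditive D]
    [HasZeroObject D] {B : Set D}
    (hB_zero : ∀ X : D, IsZero X → X ∈ B)
    (hB_sum : ∀ ⦃W X Y : D⦄, X ∈ B → Y ∈ B →
      ∀ (iX : X ⟶ W) (iY : Y ⟶ W) (pX : W ⟶ X) (pY : W ⟶ Y),
        iX ≫ pX = 𝟙 X → iY ≫ pY = 𝟙 Y → pX ≫ iX + pY ≫ iY = 𝟙 W → W ∈ B)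
    {X Y : D} (e : X ≅ Y) (hX : X ∈ B) : Y ∈ B :=
  hB_sum hX (hB_zero 0 (isZero_zero D)) e.hom 0 e.inv 0 e.hom_inv_id
    ((isZero_zero D).eq_of_src _ _) (by simp)

lemma karClosure_subset {D : Type*} [Category D] {B T : Set D} (hBT : B ⊆ T)
    (hT : ∀ X W : D, W ∈ T → IsRetractOf X W → X ∈ T) : karClosure B ⊆ T :=
  Set.sInter_subset_of_mem ⟨hBT, hT⟩

lemma subset_karClosure {D : Type*} [Category D] (B : Set D) : B ⊆ karClosure B :=
  Set.subset_sInter fun _ hT => hT.1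

lemma karClosure_eq_self {D : Type*} [Category D] {B : Set D}
    (hB : ∀ X W : D, W ∈ B → IsRetractOf X W → X ∈ B) : karClosure B = B :=
  (karClosure_subset subset_rfl hB).antisymm (subset_karClosure B)

lemma exists_iso_mem_of_isRetractOf {D : Type*} [Category D] {B : Set D}
    (hB_idem : ∀ A : D, A ∈ B → ∀ p : A ⟶ A, p ≫ p = p →
      ∃ (Y : D) (_ : Y ∈ B) (r : A ⟶ Y) (s : Y ⟶ A), r ≫ s = p ∧ s ≫ r = 𝟙 Y)
    {X W : D} (hW : W ∈ B) (hXW : IsRetractOf X W) : ∃ Z ∈ B, Nonempty (X ≅ Z) := by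
  obtain ⟨i, r, hir⟩ := hXW
  obtain ⟨Z, hZ, s, t, hst, hts⟩ :=
    hB_idem W hW (r ≫ i) (by rw [Category.assoc, reassoc_of% hir])
  exact ⟨Z, hZ, ⟨isoOfSplittingsOfSameIdempotent hir hts hst⟩⟩

theorem heart_eq_of_idempotentComplete_general (B : Set C)
    -- `B` is an additive subcategory: contains the zero objects and is closed under
    -- finite direct sums
    (hB_zero : ∀ X : C, IsZero X → X ∈ B)
    (hB_sum : ∀ ⦃W X Y : C⦄, X ∈ B → Y ∈ B →
      ∀ (iX : X ⟶ W) (iY : Y ⟶ W) (pX : W ⟶ X) (pY : W ⟶ Y),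
        iX ≫ pX = 𝟙 X → iY ≫ pY = 𝟙 Y → pX ≫ iX + pY ≫ iY = 𝟙 W → W ∈ B)
    -- `B` is idempotent complete: every idempotent endomorphism of an object of `B`
    -- splits through an object of `B`
    (hB_idem : ∀ A : C, A ∈ B → ∀ p : A ⟶ A, p ≫ p = p →
      ∃ (Y : C) (_ : Y ∈ B) (r : A ⟶ Y) (s : Y ⟶ A), r ≫ s = p ∧ s ≫ r = 𝟙 Y) :
    ∀ w : WeightStructure C, w.le ∩ w.ge = karClosure B → w.le ∩ w.ge = B := by
  intro w hw
  rw [hw]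
  refine karClosure_eq_self fun X W hW hXW => ?_
  obtain ⟨Z, hZ, ⟨e⟩⟩ := exists_iso_mem_of_isRetractOf hB_idem hW hXW
  exact mem_of_iso_of_isZero_mem_of_biprod_mem hB_zero hB_sum e.symm hZ

/-- Let `B` be a full additive subcategory of `C` which is negative, whose
objects densely generate `C`, and which is idempotent complete. Then the heart of the weight
structure on `C` determined by `B` (the unique weight structure whose heart is `Kar_C(B)`)
equals `B` itself. -/
theorem heart_eq_of_idempotentComplete (B : Set C)
    -- `B` is an additive subcategory: contains the zero objects and is closed under
    -- finite direct sums
    (hB_zero : ∀ X : C, IsZero X → X ∈ B)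
    (hB_sum : ∀ ⦃W X Y : C⦄, X ∈ B → Y ∈ B →
      ∀ (iX : X ⟶ W) (iY : Y ⟶ W) (pX : W ⟶ X) (pY : W ⟶ Y),
        iX ≫ pX = 𝟙 X → iY ≫ pY = 𝟙 Y → pX ≫ iX + pY ≫ iY = 𝟙 W → W ∈ B)
    -- `B` is negative: `Hom(X, Y⟦i⟧) = 0` for `X, Y ∈ B` and `i > 0`
    (hB_neg : ∀ ⦃X Y : C⦄, X ∈ B → Y ∈ B → ∀ i : ℤ, 0 < i → ∀ f : X ⟶ Y⟦i⟧, f = 0)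
    -- the objects of `B` densely generate `C`
    (hB_gen : ∀ X : C, X ∈ envelope {Z : C | ∃ j : ℤ, Z ∈ shiftSet B j})
    -- `B` is idempotent complete: every idempotent endomorphism of an object of `B`
    -- splits through an object of `B`
    (hB_idem : ∀ A : C, A ∈ B → ∀ p : A ⟶ A, p ≫ p = p →
      ∃ (Y : C) (_ : Y ∈ B) (r : A ⟶ Y) (s : Y ⟶ A), r ≫ s = p ∧ s ≫ r = 𝟙 Y) :
    ∀ w : WeightStructure C, w.le ∩ w.ge = karClosure B → w.le ∩ w.ge = B :=
  heart_eq_of_idempotentComplete_general B hB_zero hB_sum hB_idem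
end
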